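/- arXiv:1512.00726 — 8 statements merged into one kernel-verified Lean document; each statement's English description precedes it below -/
import Mathlib

section
/- Let G be a nontrivial connected graph. Then tpc(G) = 1 if and only if G is a complete graph, and if G is not complete then tpc(G) ≥ 3. -/
/-!
A walk of length at most one is total proper for every coloring, so in a complete graph one
color suffices. Conversely, if `a` and `b` are distinct and non-adjacent, a total proper path
from `a` to `b` has length at least two, and its first two edges together with the vertex
between them carry three pairwise distinct colors. Finiteness and connectivity make `tpc`
attained: giving every vertex and every edge its own color makes every path total proper.
-/

open SimpleGraph

variable {V : Type*} {α : Type*}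

/-- A walk in a total-colored graph (vertex coloring `cv`, edge coloring `ce`) is a
*total proper* walk if (i) any two adjacent edges on it differ in color, (ii) any two
internal adjacent vertices on it differ in color, and (iii) any internal vertex differs
in color from its incident edges on the walk. -/
def IsTotalProperWalk {G : SimpleGraph V} (cv : V → α) (ce : Sym2 V → α)
    {u v : V} (w : G.Walk u v) : Prop :=
  (∀ i : ℕ, i + 1 < w.length →
      ce (w.edges.getD i s(u, u)) ≠ ce (w.edges.getD (i + 1) s(u, u))) ∧
  (∀ i : ℕ, 1 ≤ i → i + 1 < w.length →
      cv (w.support.getD i u) ≠ cv (w.support.getD (i + 1) u)) ∧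
  (∀ i : ℕ, 1 ≤ i → i < w.length →
      cv (w.support.getD i u) ≠ ce (w.edges.getD (i - 1) s(u, u)) ∧
      cv (w.support.getD i u) ≠ ce (w.edges.getD i s(u, u)))

/-- A total-colored graph is total proper connected if any two vertices are joined by a
total proper path. -/
def TotalProperConnected (G : SimpleGraph V) (cv : V → α) (ce : Sym2 V → α) : Prop :=
  ∀ u v : V, ∃ w : G.Walk u v, w.IsPath ∧ IsTotalProperWalk cv ce w

/-- The total proper connection number: the smallest number of colors in a total coloring
making the graph total proper connected. -/
noncomputable def tpc (G : SimpleGraph V) : ℕ :=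
  sInf {k | ∃ (cv : V → Fin k) (ce : Sym2 V → Fin k), TotalProperConnected G cv ce}

namespace SimpleGraph.Walk

variable {G : SimpleGraph V} {u v : V}

lemma two_le_length_of_not_adj (w : G.Walk u v) (hne : u ≠ v) (hnadj : ¬G.Adj u v) :
    2 ≤ w.length := by
  rcases w with _ | ⟨h, _ | ⟨_, _⟩⟩
  · exact absurd rfl hne
  · exact absurd h hnadj
  · simp

lemma isTotalProperWalk_of_length_le_one (cv : V → α) (ce : Sym2 V → α) (w : G.Walk u v)
    (hw : w.length ≤ 1) : IsTotalProperWalk cv ce w :=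
  ⟨fun _ _ ↦ by omega, fun _ _ _ ↦ by omega, fun _ _ _ ↦ by omega⟩

lemma IsPath.isTotalProperWalk_of_injective {cv : V → α} {ce : Sym2 V → α}
    (hcv : cv.Injective) (hce : ce.Injective) (hdisj : ∀ x e, cv x ≠ ce e)
    {w : G.Walk u v} (hp : w.IsPath) : IsTotalProperWalk cv ce w := by
  have hedges : w.edges.length = w.length := w.length_edges
  have hsupport : w.support.length = w.length + 1 := w.length_support
  refine ⟨fun i hi ↦ ?_, fun i _ hi ↦ ?_, fun _ _ _ ↦ ⟨hdisj _ _, hdisj _ _⟩⟩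
  · rw [List.getD_eq_getElem _ _ (by omega), List.getD_eq_getElem _ _ (by omega),
      hce.ne_iff, Ne, hp.isTrail.edges_nodup.getElem_inj_iff]
    omega
  · rw [List.getD_eq_getElem _ _ (by omega), List.getD_eq_getElem _ _ (by omega),
      hcv.ne_iff, Ne, hp.support_nodup.getElem_inj_iff]
    omega

lemma three_le_card_of_isTotalProperWalk [Fintype α] {cv : V → α} {ce : Sym2 V → α}
    {w : G.Walk u v} (hw : IsTotalProperWalk cv ce w) (hlen : 2 ≤ w.length) :
    3 ≤ Fintype.card α := by
  classical
  have hedges := hw.1 0 (by omega)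
  obtain ⟨hleft, hright⟩ := hw.2.2 1 le_rfl (by omega)
  calc 3 = Finset.card {ce (w.edges.getD 0 s(u, u)), ce (w.edges.getD 1 s(u, u)),
        cv (w.support.getD 1 u)} :=
        (Finset.card_eq_three.mpr ⟨_, _, _, hedges, hleft.symm, hright.symm, rfl⟩).symm
    _ ≤ Fintype.card α := Finset.card_le_univ _

end SimpleGraph.Walk

namespace TotalProperConnected

variable {G : SimpleGraph V}

lemma of_eq_top (hG : G = ⊤) (cv : V → α) (ce : Sym2 V → α) :
    TotalProperConnected G cv ce := by
  intro u v
  by_cases huv : u = v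
  · subst huv
    exact ⟨.nil, .nil, Walk.isTotalProperWalk_of_length_le_one cv ce _ (by simp)⟩
  · have hadj : G.Adj u v := hG ▸ huv
    exact ⟨hadj.toWalk, hadj.isPath_toWalk,
      Walk.isTotalProperWalk_of_length_le_one cv ce _ hadj.length_toWalk.le⟩

lemma of_connected_of_injective (hG : G.Connected) {cv : V → α} {ce : Sym2 V → α}
    (hcv : cv.Injective) (hce : ce.Injective) (hdisj : ∀ x e, cv x ≠ ce e) :
    TotalProperConnected G cv ce := by
  classical
  intro u v
  let w := (hG.preconnected u v).some.toPath
  exact ⟨w, w.2, w.2.isTotalProperWalk_of_injective hcv hce hdisj⟩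

lemma eq_top_of_card_lt_three [Fintype α] {cv : V → α} {ce : Sym2 V → α}
    (h : TotalProperConnected G cv ce) (hα : Fintype.card α < 3) : G = ⊤ := by
  by_contra hne
  obtain ⟨a, b, hab, hnadj⟩ := ne_top_iff_exists_not_adj.mp hne
  obtain ⟨w, -, hw⟩ := h a b
  exact hα.not_ge <|
    Walk.three_le_card_of_isTotalProperWalk hw (w.two_le_length_of_not_adj hab hnadj)

end TotalProperConnected

lemma tpc_le {G : SimpleGraph V} {k : ℕ} {cv : V → Fin k} {ce : Sym2 V → Fin k}
    (h : TotalProperConnected G cv ce) : tpc G ≤ k :=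
  Nat.sInf_le ⟨cv, ce, h⟩

section Tpc

variable [Fintype V] {G : SimpleGraph V}

lemma exists_totalProperConnected_fin_tpc (hG : G.Connected) :
    ∃ (cv : V → Fin (tpc G)) (ce : Sym2 V → Fin (tpc G)), TotalProperConnected G cv ce := by
  classical
  let f := Fintype.equivFin (V ⊕ Sym2 V)
  refine Nat.sInf_mem (s := {k | ∃ (cv : V → Fin k) (ce : Sym2 V → Fin k),
    TotalProperConnected G cv ce}) ⟨_, f ∘ Sum.inl, f ∘ Sum.inr, .of_connected_of_injective hG
    (f.injective.comp Sum.inl_injective) (f.injective.comp Sum.inr_injective)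
    fun _ _ ↦ f.injective.ne Sum.inl_ne_inr⟩

lemma three_le_tpc (hG : G.Connected) (hne : G ≠ ⊤) : 3 ≤ tpc G := by
  obtain ⟨cv, ce, h⟩ := exists_totalProperConnected_fin_tpc hG
  by_contra hlt
  exact hne (h.eq_top_of_card_lt_three (by simpa using hlt))

lemma tpc_ne_zero [Nonempty V] (hG : G.Connected) : tpc G ≠ 0 := by
  obtain ⟨cv, -, -⟩ := exists_totalProperConnected_fin_tpc hG
  intro h
  exact (h ▸ cv (Classical.arbitrary V)).elim0

end Tpc

/-- For a nontrivial connected graph `G`: `tpc G = 1` iff `G` is complete, and if `G` is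
not complete then `tpc G ≥ 3`. -/
theorem stmt_0 {V : Type*} [Fintype V] (G : SimpleGraph V)
    (hG : G.Connected) (hV : Nontrivial V) :
    (tpc G = 1 ↔ G = (⊤ : SimpleGraph V)) ∧
    (G ≠ (⊤ : SimpleGraph V) → 3 ≤ tpc G) := by
  refine ⟨⟨fun h1 ↦ ?_, fun htop ↦ ?_⟩, three_le_tpc hG⟩
  · by_contra hne
    have := three_le_tpc hG hne
    omega
  · have hle : tpc G ≤ 1 :=
      tpc_le (TotalProperConnected.of_eq_top htop (fun _ ↦ (0 : Fin 1)) fun _ ↦ 0)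
    have := tpc_ne_zero hG
    omega
end

section
/- If T is a tree of order n ≥ 3, then tpc(T) = Δ(T) + 1, where Δ(T) denotes the maximum degree of T. -/
open SimpleGraph

variable {V : Type*} {α : Type*}

/-- The maximum degree of a finite graph. -/
noncomputable def maxDeg {V : Type*} [Fintype V] (G : SimpleGraph V) : ℕ :=
  Finset.univ.sup fun v => (G.neighborSet v).ncard

/-!
A tree with maximum degree `Δ` has a proper total colouring with `max (Δ + 1) 3` colours: delete a
leaf edge, colour the rest, then give the leaf edge a colour missing at its inner endpoint (at most
`Δ` colours are taken there) and the leaf a colour other than those of its neighbour and of the new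
edge. In a proper total colouring every path is total proper, so `tpc T ≤ Δ + 1`. Conversely, two
neighbours `a ≠ b` of a vertex `v` are joined in a tree only by the path `a v b`, so the edges at
`v` and `v` itself get pairwise distinct colours; at a vertex of maximum degree `Δ ≥ 2` this
forces `Δ + 1` colours.
-/

namespace SimpleGraph.Walk

variable {G : SimpleGraph V} {u v : V}

lemma support_getD_eq_getVert (p : G.Walk u v) (d : V) {i : ℕ} (hi : i ≤ p.length) :
    p.support.getD i d = p.getVert i := by
  rw [List.getD_eq_getElem _ _ (by simp only [length_support]; omega), support_getElem_eq_getVert]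

lemma edges_getD_eq_mk_getVert (p : G.Walk u v) (d : Sym2 V) {i : ℕ} (hi : i < p.length) :
    p.edges.getD i d = s(p.getVert i, p.getVert (i + 1)) := by
  rw [List.getD_eq_getElem _ _ (by simpa), getElem_edges]

end SimpleGraph.Walk

lemma Set.exists_notMem_of_ncard_lt_card [Finite α] {s : Set α} (h : s.ncard < Nat.card α) :
    ∃ a, a ∉ s := by
  by_contra! hs
  simp [Set.eq_univ_of_forall hs] at h

structure IsProperTotalColoring (G : SimpleGraph V) (cv : V → α) (ce : Sym2 V → α) : Prop where
  vertex_ne : ∀ ⦃u v⦄, G.Adj u v → cv u ≠ cv v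
  edge_ne : ∀ ⦃v a b⦄, G.Adj v a → G.Adj v b → a ≠ b → ce s(v, a) ≠ ce s(v, b)
  vertex_ne_edge : ∀ ⦃v a⦄, G.Adj v a → cv v ≠ ce s(v, a)

namespace IsProperTotalColoring

variable {G : SimpleGraph V} {cv : V → α} {ce : Sym2 V → α}

lemma isTotalProperWalk (h : IsProperTotalColoring G cv ce) {u v : V} {p : G.Walk u v}
    (hp : p.IsPath) : IsTotalProperWalk cv ce p := by
  have hadj (i : ℕ) (hi : i < p.length) : G.Adj (p.getVert i) (p.getVert (i + 1)) :=
    p.adj_getVert_succ hi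
  refine ⟨fun i hi => ?_, fun i _ hi => ?_, fun i hi₁ hi₂ => ?_⟩
  · rw [p.edges_getD_eq_mk_getVert _ (by omega), p.edges_getD_eq_mk_getVert _ hi, Sym2.eq_swap]
    refine h.edge_ne (hadj i (by omega)).symm (hadj (i + 1) hi) fun heq => ?_
    have := hp.getVert_injOn (by omega : i ≤ p.length) (by omega : i + 2 ≤ p.length) heq
    omega
  · rw [p.support_getD_eq_getVert _ (by omega), p.support_getD_eq_getVert _ (by omega)]
    exact h.vertex_ne (hadj i (by omega))
  · obtain ⟨j, rfl⟩ : ∃ j, i = j + 1 := ⟨i - 1, by omega⟩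
    rw [p.support_getD_eq_getVert _ (by omega), p.edges_getD_eq_mk_getVert _ (by omega),
      p.edges_getD_eq_mk_getVert _ hi₂, Nat.add_sub_cancel, Sym2.eq_swap]
    exact ⟨h.vertex_ne_edge (hadj j (by omega)).symm, h.vertex_ne_edge (hadj (j + 1) hi₂)⟩

lemma totalProperConnected (h : IsProperTotalColoring G cv ce) (hG : G.Preconnected) :
    TotalProperConnected G cv ce := fun u v =>
  have ⟨p, hp⟩ := hG.exists_isPath u v
  ⟨p, hp, h.isTotalProperWalk hp⟩

lemma extend_leaf [DecidableEq V] {x y : V} (hxy : G.Adj x y) (hx : ∀ z, G.Adj x z → z = y)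
    (h : IsProperTotalColoring (G.deleteEdges {s(x, y)}) cv ce) {c d : α} (hcy : c ≠ cv y)
    (hc : ∀ a, (G.deleteEdges {s(x, y)}).Adj y a → c ≠ ce s(y, a)) (hdy : d ≠ cv y)
    (hdc : d ≠ c) :
    IsProperTotalColoring G (Function.update cv x d) (Function.update ce s(x, y) c) := by
  have hyx : y ≠ x := hxy.ne'
  have hcases : ∀ ⦃u v⦄, G.Adj u v → (u = x ∧ v = y) ∨ (u = y ∧ v = x) ∨
      ((G.deleteEdges {s(x, y)}).Adj u v ∧ u ≠ x ∧ v ≠ x ∧ s(u, v) ≠ s(x, y)) := by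
    intro u v huv
    by_cases he : s(u, v) = s(x, y)
    · exact (Sym2.eq_iff.mp he).imp id Or.inl
    · refine Or.inr (Or.inr ⟨by simp [huv, he], ?_, ?_, he⟩) <;> rintro rfl
      · exact he (by rw [hx v huv])
      · exact he (by rw [hx u huv.symm, Sym2.eq_swap])
  refine ⟨fun u v huv => ?_, fun v a b hva hvb hab => ?_, fun v a hva => ?_⟩
  · rcases hcases huv with ⟨hu, hv⟩ | ⟨hu, hv⟩ | ⟨huv', hux, hvx, -⟩
    · subst u v
      simpa [hyx] using hdy
    · subst u v
      simpa [hyx] using hdy.symm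
    · simpa [hux, hvx] using h.vertex_ne huv'
  · rcases hcases hva with ⟨hv, ha⟩ | ⟨hv, ha⟩ | ⟨hva', hvx, -, hvae⟩
    · subst v a
      exact absurd (hx b hvb).symm hab
    · subst v a
      rcases hcases hvb with ⟨hy, -⟩ | ⟨-, hb⟩ | ⟨hvb', -, -, hvbe⟩
      · exact absurd hy hyx
      · exact absurd hb.symm hab
      · simpa [Sym2.eq_swap, hvbe] using hc b hvb'
    · rcases hcases hvb with ⟨hv, -⟩ | ⟨hv, hb⟩ | ⟨hvb', -, -, hvbe⟩
      · exact absurd hv hvx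
      · subst v b
        simpa [Sym2.eq_swap, hvae] using (hc a hva').symm
      · simpa [hvae, hvbe] using h.edge_ne hva' hvb' hab
  · rcases hcases hva with ⟨hv, ha⟩ | ⟨hv, ha⟩ | ⟨hva', hvx, -, hvae⟩
    · subst v a
      simpa using hdc
    · subst v a
      simpa [hyx, Sym2.eq_swap] using hcy.symm
    · simpa [hvx, hvae] using h.vertex_ne_edge hva'

end IsProperTotalColoring

namespace SimpleGraph

variable {G : SimpleGraph V}

lemma IsAcyclic.exists_leaf [Finite V] (hG : G.IsAcyclic) {a b : V} (hab : G.Adj a b) :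
    ∃ x y, G.Adj x y ∧ ∀ z, G.Adj x z → z = y := by
  have : Nonempty V := ⟨a⟩
  obtain ⟨u, v, p, hp, hmax⟩ := Walk.exists_isPath_forall_isPath_length_le_length G
  have hnil : ¬p.Nil :=
    Walk.not_nil_iff_lt_length.mpr (hmax a b (.cons hab .nil) (by simp [hab.ne]))
  refine ⟨u, p.snd, p.adj_snd hnil, fun z hz => hG.eq_snd_of_adj_start hp hz ?_⟩
  by_contra hzp
  have := hmax z v (p.cons hz.symm) (hp.cons hzp)
  simp at this

lemma IsAcyclic.exists_isProperTotalColoring [Finite V] [Finite α]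
    (hG : G.IsAcyclic) (hα : 3 ≤ Nat.card α)
    (hdeg : ∀ v, (G.neighborSet v).ncard < Nat.card α) :
    ∃ (cv : V → α) (ce : Sym2 V → α), IsProperTotalColoring G cv ce := by
  classical
  induction G using WellFoundedLT.induction with | _ G ih
  by_cases hE : ∃ a b, G.Adj a b
  swap
  · push Not at hE
    have : Nonempty α := Nat.card_pos_iff.mp (by omega) |>.1
    exact ⟨fun _ => Classical.arbitrary α, fun _ => Classical.arbitrary α,
      fun u v h => (hE u v h).elim, fun v a _ h => (hE v a h).elim, fun v a h => (hE v a h).elim⟩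
  obtain ⟨a, b, hab⟩ := hE
  obtain ⟨x, y, hxy, hx⟩ := hG.exists_leaf hab
  have hG'G : G.deleteEdges {s(x, y)} < G :=
    (deleteEdges_le _).lt_of_ne <| deleteEdges_eq_self.not.mpr <| by simpa using hxy
  set G' := G.deleteEdges {s(x, y)}
  obtain ⟨cv, ce, h⟩ := ih G' hG'G (hG.anti hG'G.le) fun v =>
    (Set.ncard_le_ncard (neighborSet_mono hG'G.le v)).trans_lt (hdeg v)
  have hN : G'.neighborSet y = G.neighborSet y \ {x} := by
    ext a
    simp [G', hxy.ne']
  obtain ⟨c, hc⟩ := Set.exists_notMem_of_ncard_lt_card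
      (s := insert (cv y) ((fun a => ce s(y, a)) '' G'.neighborSet y)) <| calc
    _ ≤ ((fun a => ce s(y, a)) '' G'.neighborSet y).ncard + 1 := Set.ncard_insert_le _ _
    _ ≤ (G'.neighborSet y).ncard + 1 := by gcongr; exact Set.ncard_image_le
    _ = (G.neighborSet y).ncard := by
      rw [hN, Set.ncard_sdiff_singleton_add_one ((G.mem_neighborSet y x).mpr hxy.symm)]
    _ < Nat.card α := hdeg y
  obtain ⟨d, hd⟩ := Set.exists_notMem_of_ncard_lt_card (s := {cv y, c})
    ((Set.ncard_insert_le _ _).trans_lt (by rw [Set.ncard_singleton]; omega))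
  simp only [Set.mem_insert_iff, Set.mem_image, mem_neighborSet, not_or, not_exists,
    not_and, Set.mem_singleton_iff] at hc hd
  exact ⟨_, _, h.extend_leaf hxy hx hc.1 (fun a ha heq => hc.2 a ha heq.symm) hd.1 hd.2⟩

end SimpleGraph

namespace TotalProperConnected

variable {G : SimpleGraph V} {cv : V → α} {ce : Sym2 V → α}

lemma edge_ne_and_vertex_ne_of_adj (h : TotalProperConnected G cv ce) (hG : G.IsAcyclic)
    {v a b : V} (ha : G.Adj v a) (hb : G.Adj v b) (hab : a ≠ b) :
    ce s(v, a) ≠ ce s(v, b) ∧ cv v ≠ ce s(v, a) := by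
  obtain ⟨p, hp, hpt⟩ := h a b
  have hq : (Walk.cons ha.symm (Walk.cons hb Walk.nil)).IsPath := by
    simp [ha.ne', hab, hb.ne]
  obtain rfl : p = _ := congrArg Subtype.val ((hG.subsingleton_path a b).elim ⟨p, hp⟩ ⟨_, hq⟩)
  have hedges := hpt.1 0 (by simp)
  have hvertex := (hpt.2.2 1 le_rfl (by simp)).1
  simp only [Walk.edges_cons, Walk.support_cons, List.getD_cons_zero, List.getD_cons_succ,
    Nat.sub_self] at hedges hvertex
  rw [Sym2.eq_swap] at hedges hvertex
  exact ⟨hedges, hvertex⟩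

lemma ncard_neighborSet_lt_card [Finite α] (h : TotalProperConnected G cv ce)
    (hG : G.IsAcyclic) {v : V} (hv : 2 ≤ (G.neighborSet v).ncard) :
    (G.neighborSet v).ncard < Nat.card α := by
  set f := fun a => ce s(v, a)
  have hinj : Set.InjOn f (G.neighborSet v) := fun a ha b hb hfab => by
    by_contra hab
    exact (h.edge_ne_and_vertex_ne_of_adj hG ha hb hab).1 hfab
  have hnotMem : cv v ∉ f '' G.neighborSet v := by
    rintro ⟨a, ha, hfa⟩
    obtain ⟨b, hb, hba⟩ := (G.neighborSet v).exists_ne_of_one_lt_ncard (by omega) a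
    exact (h.edge_ne_and_vertex_ne_of_adj hG ha hb hba.symm).2 hfa.symm
  calc (G.neighborSet v).ncard < (f '' G.neighborSet v).ncard + 1 := by
        rw [hinj.ncard_image]; omega
    _ = (insert (cv v) (f '' G.neighborSet v)).ncard := (Set.ncard_insert_of_notMem hnotMem).symm
    _ ≤ Nat.card α := Set.ncard_le_card _

end TotalProperConnected

section maxDeg

variable [Fintype V]

lemma ncard_neighborSet_le_maxDeg (G : SimpleGraph V) (v : V) :
    (G.neighborSet v).ncard ≤ maxDeg G :=
  Finset.le_sup (f := fun v => (G.neighborSet v).ncard) (Finset.mem_univ v)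

lemma exists_ncard_neighborSet_eq_maxDeg [Nonempty V] (G : SimpleGraph V) :
    ∃ v, (G.neighborSet v).ncard = maxDeg G :=
  have ⟨v, _, hv⟩ := Finset.exists_mem_eq_sup _ Finset.univ_nonempty
    fun v => (G.neighborSet v).ncard
  ⟨v, hv.symm⟩

-- a tree on `n` vertices has degree sum `2 (n - 1) > n`, so some degree exceeds `1`
lemma SimpleGraph.IsTree.two_le_maxDeg {G : SimpleGraph V} (hG : G.IsTree)
    (hn : 3 ≤ Fintype.card V) : 2 ≤ maxDeg G := by
  classical
  by_contra! hΔ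
  have hsum : ∑ v, G.degree v ≤ ∑ _v : V, 1 := Finset.sum_le_sum fun v _ => by
    have := ncard_neighborSet_le_maxDeg G v
    rw [Set.ncard_eq_toFinset_card', ← neighborFinset_def, card_neighborFinset_eq_degree] at this
    omega
  have := hG.card_edgeFinset
  rw [sum_degrees_eq_twice_card_edges] at hsum
  simp only [Finset.sum_const, Finset.card_univ, smul_eq_mul, mul_one] at hsum
  omega

end maxDeg

/-- If `T` is a tree of order `n ≥ 3`, then `tpc T = Δ(T) + 1`. -/
theorem stmt_4 {V : Type*} [Fintype V] (T : SimpleGraph V)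
    (hn : 3 ≤ Fintype.card V) (hT : T.IsTree) :
    tpc T = maxDeg T + 1 := by
  classical
  have hΔ := hT.two_le_maxDeg hn
  obtain ⟨cv, ce, hc⟩ := hT.isAcyclic.exists_isProperTotalColoring (α := Fin (maxDeg T + 1))
    (by rw [Nat.card_fin]; omega) fun v => by
      simpa [Nat.lt_succ_iff] using ncard_neighborSet_le_maxDeg T v
  have hmem : maxDeg T + 1 ∈
      {k | ∃ (cv : V → Fin k) (ce : Sym2 V → Fin k), TotalProperConnected T cv ce} :=
    ⟨cv, ce, hc.totalProperConnected hT.connected.preconnected⟩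
  refine le_antisymm (Nat.sInf_le hmem) (le_csInf ⟨_, hmem⟩ ?_)
  rintro k ⟨cv', ce', h'⟩
  have : Nonempty V := hT.connected.nonempty
  obtain ⟨v, hv⟩ := exists_ncard_neighborSet_eq_maxDeg T
  have hlt := h'.ncard_neighborSet_lt_card hT.isAcyclic (hv ▸ hΔ)
  rw [hv, Nat.card_fin] at hlt
  exact hlt
end

section
/- If G is a traceable graph (a graph containing a Hamiltonian path) that is not complete, then tpc(G) = 3. -/
open SimpleGraph

variable {V : Type*} {α : Type*}

/-!
Lower bound: two non-adjacent vertices are joined only by paths of length at least two, and the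
first two edges together with the vertex between them need three distinct colors.

Upper bound: color the `i`-th vertex of a Hamiltonian path by `i mod 3` and each edge by the
residue missing from its two endpoints. Along any subpath of the Hamiltonian path, read in either
direction, the vertex colors then step by a fixed `s = ±1`, and every local condition of a total
proper path becomes a nonzero multiple of `s` in `ZMod 3`.
-/

namespace SimpleGraph.Walk

variable {β : Type*} {G : SimpleGraph V} {u v : V}

lemma getD_support_eq_getVert (w : G.Walk u v) {i : ℕ} (hi : i ≤ w.length) (d : V) :
    w.support.getD i d = w.getVert i := by
  rw [w.getVert_eq_support_getElem hi, List.getD_eq_getElem]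

lemma getD_edges_eq_getVert (w : G.Walk u v) {i : ℕ} (hi : i < w.length) (e : Sym2 V) :
    w.edges.getD i e = s(w.getVert i, w.getVert (i + 1)) := by
  rw [List.getD_eq_getElem _ _ (by simpa using hi), getElem_edges]

def IncreasesBy [Add β] (c : V → β) (s : β) (w : G.Walk u v) : Prop :=
  ∀ i < w.length, c (w.getVert (i + 1)) = c (w.getVert i) + s

lemma IsPath.increasesBy_idxOf [DecidableEq V] [AddMonoidWithOne β] {p : G.Walk u v}
    (hp : p.IsPath) : p.IncreasesBy (fun x => (p.support.idxOf x : β)) 1 := by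
  have hidx : ∀ n ≤ p.length, p.support.idxOf (p.getVert n) = n := by
    intro n hn
    have hmem := p.getVert_mem_support n
    have hlt := List.idxOf_lt_length_of_mem hmem
    rw [length_support] at hlt
    exact hp.getVert_injOn (Nat.lt_succ_iff.mp hlt) hn (p.getVert_support_idxOf hmem)
  intro i hi
  simp only [hidx i hi.le, hidx (i + 1) hi, Nat.cast_succ]

lemma IncreasesBy.reverse [AddGroup β] {c : V → β} {s : β} {w : G.Walk u v}
    (h : w.IncreasesBy c s) : w.reverse.IncreasesBy c (-s) := by
  intro i hi
  rw [length_reverse] at hi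
  have := h (w.length - (i + 1)) (by omega)
  rw [show w.length - (i + 1) + 1 = w.length - i by omega] at this
  simp only [getVert_reverse, this, add_neg_cancel_right]

section Add

variable [Add β] {c : V → β} {s : β}

lemma IncreasesBy.take {w : G.Walk u v} (h : w.IncreasesBy c s) (n : ℕ) :
    (w.take n).IncreasesBy c s := by
  intro i hi
  rw [take_length] at hi
  simp only [take_getVert]
  rw [min_eq_right (by omega), min_eq_right (by omega)]
  exact h i (by omega)

lemma IncreasesBy.drop {w : G.Walk u v} (h : w.IncreasesBy c s) (n : ℕ) :
    (w.drop n).IncreasesBy c s := by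
  intro i hi
  rw [drop_length] at hi
  simpa only [drop_getVert, ← add_assoc] using h (n + i) (by omega)

lemma IncreasesBy.copy {u' v' : V} {w : G.Walk u v} (h : w.IncreasesBy c s) (hu : u = u')
    (hv : v = v') : (w.copy hu hv).IncreasesBy c s := by
  subst hu hv
  exact h

lemma IsPath.exists_isPath_increasesBy {p : G.Walk u v} (hp : p.IsPath) (hc : p.IncreasesBy c s)
    {i j : ℕ} (hij : i ≤ j) :
    ∃ w : G.Walk (p.getVert i) (p.getVert j), w.IsPath ∧ w.IncreasesBy c s :=
  ⟨((p.drop i).take (j - i)).copy rfl (by rw [drop_getVert, Nat.add_sub_cancel' hij]),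
    by simpa using (hp.drop i).take (j - i), ((hc.drop i).take _).copy _ _⟩

end Add

end SimpleGraph.Walk

lemma isTotalProperWalk_iff {G : SimpleGraph V} {cv : V → α} {ce : Sym2 V → α} {u v : V}
    (w : G.Walk u v) :
    IsTotalProperWalk cv ce w ↔
      (∀ i, i + 1 < w.length →
        ce s(w.getVert i, w.getVert (i + 1)) ≠ ce s(w.getVert (i + 1), w.getVert (i + 2))) ∧
      (∀ i, 1 ≤ i → i + 1 < w.length → cv (w.getVert i) ≠ cv (w.getVert (i + 1))) ∧
      (∀ i, 1 ≤ i → i < w.length →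
        cv (w.getVert i) ≠ ce s(w.getVert (i - 1), w.getVert i) ∧
        cv (w.getVert i) ≠ ce s(w.getVert i, w.getVert (i + 1))) := by
  refine and_congr (forall₂_congr fun i hi => ?_) (and_congr
    (forall₃_congr fun i hi hi' => ?_) (forall₃_congr fun i hi hi' => ?_))
  · rw [w.getD_edges_eq_getVert (by omega), w.getD_edges_eq_getVert hi]
  · rw [w.getD_support_eq_getVert (by omega), w.getD_support_eq_getVert (by omega)]
  · rw [w.getD_support_eq_getVert (by omega), w.getD_edges_eq_getVert (by omega),
      w.getD_edges_eq_getVert hi', Nat.sub_add_cancel hi]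

lemma IsTotalProperWalk.comp {β : Type*} {G : SimpleGraph V} {cv : V → α} {ce : Sym2 V → α}
    {u v : V} {w : G.Walk u v} (h : IsTotalProperWalk cv ce w) {f : α → β}
    (hf : Function.Injective f) : IsTotalProperWalk (f ∘ cv) (f ∘ ce) w :=
  ⟨fun i hi => hf.ne (h.1 i hi), fun i hi hi' => hf.ne (h.2.1 i hi hi'),
    fun i hi hi' => ⟨hf.ne (h.2.2 i hi hi').1, hf.ne (h.2.2 i hi hi').2⟩⟩

lemma TotalProperConnected.exists_fin_card [Fintype α] {G : SimpleGraph V} {cv : V → α}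
    {ce : Sym2 V → α} (h : TotalProperConnected G cv ce) :
    ∃ (cv' : V → Fin (Fintype.card α)) (ce' : Sym2 V → Fin (Fintype.card α)),
      TotalProperConnected G cv' ce' := by
  let e := Fintype.equivFin α
  refine ⟨e ∘ cv, e ∘ ce, fun u v => ?_⟩
  obtain ⟨w, hwp, hw⟩ := h u v
  exact ⟨w, hwp, hw.comp e.injective⟩

lemma TotalProperConnected.three_le_card [Fintype α] {G : SimpleGraph V} {cv : V → α}
    {ce : Sym2 V → α} (h : TotalProperConnected G cv ce) (hG : G ≠ ⊤) :
    3 ≤ Fintype.card α := by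
  obtain ⟨x, y, hxy, hnadj⟩ := ne_top_iff_exists_not_adj.mp hG
  obtain ⟨w, -, hw⟩ := h x y
  have hlen : 2 ≤ w.length := by
    by_contra! hlt
    interval_cases hl : w.length
    · exact hxy (w.eq_of_length_eq_zero hl)
    · exact hnadj (w.adj_of_length_eq_one hl)
  obtain ⟨hedges, -, hvert⟩ := (isTotalProperWalk_iff w).mp hw
  exact Fintype.two_lt_card_iff.mpr ⟨_, _, _, hedges 0 (by omega),
    (hvert 1 le_rfl (by omega)).1.symm, (hvert 1 le_rfl (by omega)).2.symm⟩

-- For `x ≠ y` in `ZMod 3`, `-(x + y)` is the third residue, since `0 + 1 + 2 = 0`.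
def thirdColor (c : V → ZMod 3) : Sym2 V → ZMod 3 :=
  Sym2.lift ⟨fun x y => -(c x + c y), fun x y => by simp only [add_comm]⟩

@[simp]
lemma thirdColor_mk (c : V → ZMod 3) (x y : V) : thirdColor c s(x, y) = -(c x + c y) := rfl

lemma isTotalProperWalk_thirdColor {G : SimpleGraph V} {u v : V} {w : G.Walk u v}
    {c : V → ZMod 3} {s : ZMod 3} (hs : s ≠ 0) (hw : w.IncreasesBy c s) :
    IsTotalProperWalk c (thirdColor c) w := by
  have key : ∀ x : ZMod 3, x ≠ x + s ∧ -(x + (x + s)) ≠ -(x + s + (x + s + s)) ∧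
      x + s ≠ -(x + (x + s)) ∧ x ≠ -(x + (x + s)) := by
    clear hw; revert s; decide
  refine (isTotalProperWalk_iff w).mpr ⟨fun i hi => ?_, fun i _ hi => ?_, fun i hi hi' => ?_⟩
  · simpa only [thirdColor_mk, hw (i + 1) hi, hw i (by omega)] using (key _).2.1
  · simpa only [hw i (by omega)] using (key _).1
  · obtain ⟨i, rfl⟩ := Nat.exists_eq_add_of_le' hi
    simpa only [thirdColor_mk, Nat.add_sub_cancel, hw i (by omega), hw (i + 1) hi'] using
      ⟨(key _).2.2.1, (key _).2.2.2⟩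

open Walk in
lemma totalProperConnected_thirdColor {G : SimpleGraph V} {a b : V} {p : G.Walk a b}
    (hp : p.IsPath) (hall : ∀ x, x ∈ p.support) {c : V → ZMod 3} {s : ZMod 3} (hs : s ≠ 0)
    (hc : p.IncreasesBy c s) : TotalProperConnected G c (thirdColor c) := by
  intro u v
  obtain ⟨i, rfl, -⟩ := mem_support_iff_exists_getVert.mp (hall u)
  obtain ⟨j, rfl, -⟩ := mem_support_iff_exists_getVert.mp (hall v)
  rcases le_total i j with hij | hji
  · obtain ⟨w, hwp, hwc⟩ := hp.exists_isPath_increasesBy hc hij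
    exact ⟨w, hwp, isTotalProperWalk_thirdColor hs hwc⟩
  · obtain ⟨w, hwp, hwc⟩ := hp.exists_isPath_increasesBy hc hji
    exact ⟨w.reverse, hwp.reverse, isTotalProperWalk_thirdColor (neg_ne_zero.mpr hs) hwc.reverse⟩

theorem stmt_6_general {V : Type*} (G : SimpleGraph V)
    (htr : ∃ (u v : V) (p : G.Walk u v), p.IsPath ∧ ∀ x : V, x ∈ p.support)
    (hnc : G ≠ (⊤ : SimpleGraph V)) :
    tpc G = 3 := by
  classical
  obtain ⟨a, b, p, hp, hall⟩ := htr
  have hconn := totalProperConnected_thirdColor hp hall one_ne_zero hp.increasesBy_idxOf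
  have h3 : 3 ∈ {k | ∃ (cv : V → Fin k) (ce : Sym2 V → Fin k), TotalProperConnected G cv ce} :=
    ZMod.card 3 ▸ hconn.exists_fin_card
  refine le_antisymm (Nat.sInf_le h3) (le_csInf ⟨3, h3⟩ ?_)
  rintro k ⟨cv, ce, h⟩
  simpa using h.three_le_card hnc

/-- If `G` is a traceable graph (it has a Hamiltonian path) that is not complete,
then `tpc G = 3`. -/
theorem stmt_6 {V : Type*} [Fintype V] (G : SimpleGraph V)
    (htr : ∃ (u v : V) (p : G.Walk u v), p.IsPath ∧ ∀ x : V, x ∈ p.support)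
    (hnc : G ≠ (⊤ : SimpleGraph V)) :
    tpc G = 3 :=
  stmt_6_general G htr hnc
end

section
/- For the star K_{1,n} with n ≥ 2, tpc(K_{1,n}) = n + 1. -/
open SimpleGraph

variable {V : Type*} {α : Type*}

/-! Between two distinct leaves of a star the only path is leaf–centre–leaf, so a total proper
connected colouring gives the `n` edges pairwise distinct colours, all different from the colour
of the centre: at least `n + 1` colours. Conversely, distinct edge colours plus one further colour
for every vertex suffice, since every other pair of vertices is joined by a path without internal
vertices. -/

section
variable {G : SimpleGraph V} {cv : V → α} {ce : Sym2 V → α}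

theorem isTotalProperWalk_of_length_le_one {u v : V} {w : G.Walk u v} (hw : w.length ≤ 1) :
    IsTotalProperWalk cv ce w :=
  ⟨fun _ _ => by omega, fun _ _ _ => by omega, fun _ _ _ => by omega⟩

theorem isTotalProperWalk_cons_cons_nil_iff {u v w : V} (h₁ : G.Adj u v) (h₂ : G.Adj v w) :
    IsTotalProperWalk cv ce (.cons h₁ (.cons h₂ .nil)) ↔
      ce s(u, v) ≠ ce s(v, w) ∧ cv v ≠ ce s(u, v) ∧ cv v ≠ ce s(v, w) := by
  simp only [IsTotalProperWalk, Walk.length_cons, Walk.length_nil]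
  refine ⟨fun ⟨hE, _, hVE⟩ => ⟨by simpa using hE 0, by simpa using hVE 1⟩, ?_⟩
  rintro ⟨hE, hV₁, hV₂⟩
  refine ⟨fun i hi => ?_, fun i _ _ => by omega, fun i _ _ => ?_⟩
  · obtain rfl : i = 0 := by omega
    simpa using hE
  · obtain rfl : i = 1 := by omega
    simpa using ⟨hV₁, hV₂⟩

theorem exists_totalProperPath_of_eq_or_adj {u v : V} (h : u = v ∨ G.Adj u v) :
    ∃ w : G.Walk u v, w.IsPath ∧ IsTotalProperWalk cv ce w := by
  rcases h with rfl | h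
  · exact ⟨.nil, .nil, isTotalProperWalk_of_length_le_one (by simp)⟩
  · exact ⟨h.toWalk, h.isPath_toWalk, isTotalProperWalk_of_length_le_one (by simp)⟩

theorem TotalProperConnected.comp_injective {β : Type*} {f : α → β} (hf : f.Injective)
    (h : TotalProperConnected G cv ce) : TotalProperConnected G (f ∘ cv) (f ∘ ce) := by
  intro u v
  obtain ⟨w, hw, hE, hV, hVE⟩ := h u v
  exact ⟨w, hw, fun i hi => hf.ne (hE i hi), fun i hi hi' => hf.ne (hV i hi hi'),
    fun i hi hi' => ⟨hf.ne (hVE i hi hi').1, hf.ne (hVE i hi hi').2⟩⟩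

theorem tpc_le_card [Fintype α] (h : TotalProperConnected G cv ce) : tpc G ≤ Fintype.card α :=
  Nat.sInf_le ⟨_, _, h.comp_injective (Fintype.equivFin α).injective⟩

end

section Star
variable {W : Type*}

theorem eq_center_of_adj_leaf {i : W} {v : Fin 1 ⊕ W}
    (h : (completeBipartiteGraph (Fin 1) W).Adj (.inr i) v) : v = .inl 0 := by
  obtain c | m := v
  · rw [Subsingleton.elim c 0]
  · simp at h

def centerWalk (i j : W) : (completeBipartiteGraph (Fin 1) W).Walk (.inr i) (.inr j) :=
  .cons (v := .inl 0) (by simp) (.cons (by simp) .nil)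

theorem eq_centerWalk_of_isPath {i j : W} (hij : i ≠ j)
    {w : (completeBipartiteGraph (Fin 1) W).Walk (.inr i) (.inr j)} (hw : w.IsPath) :
    w = centerWalk i j := by
  cases w with
  | nil => exact absurd rfl hij
  | @cons _ v _ h₁ w =>
    obtain rfl := eq_center_of_adj_leaf h₁
    cases w with
    | @cons _ v _ h₂ w =>
      obtain ⟨m, rfl⟩ : ∃ m, v = .inr m := by cases v <;> simp at h₂ ⊢
      cases w with
      | nil => rfl
      | @cons _ v _ h₃ w =>
        obtain rfl := eq_center_of_adj_leaf h₃
        simp [Walk.cons_isPath_iff] at hw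

theorem centerWalk_isPath {i j : W} (hij : i ≠ j) : (centerWalk i j).IsPath := by
  simp [centerWalk, Walk.isPath_def, hij]

def starVertexColoring : Fin 1 ⊕ W → Option W := fun _ => none

def starEdgeColoring : Sym2 (Fin 1 ⊕ W) → Option W :=
  Sym2.lift ⟨fun
    | .inl _, .inr j => some j
    | .inr j, .inl _ => some j
    | _, _ => none,
    by rintro (_ | _) (_ | _) <;> rfl⟩

theorem totalProperConnected_star :
    TotalProperConnected (completeBipartiteGraph (Fin 1) W)
      starVertexColoring starEdgeColoring := by
  rintro (a | i) (b | j)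
  · exact exists_totalProperPath_of_eq_or_adj (.inl (congrArg _ (Subsingleton.elim a b)))
  · exact exists_totalProperPath_of_eq_or_adj (.inr (by simp))
  · exact exists_totalProperPath_of_eq_or_adj (.inr (by simp))
  by_cases hij : i = j
  · exact exists_totalProperPath_of_eq_or_adj (.inl (congrArg _ hij))
  refine ⟨centerWalk i j, centerWalk_isPath hij, ?_⟩
  rw [centerWalk, isTotalProperWalk_cons_cons_nil_iff]
  simp [starVertexColoring, starEdgeColoring, hij]

section Coloring
variable {cv : Fin 1 ⊕ W → α} {ce : Sym2 (Fin 1 ⊕ W) → α}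

theorem TotalProperConnected.isTotalProperWalk_centerWalk
    (h : TotalProperConnected (completeBipartiteGraph (Fin 1) W) cv ce) {i j : W} (hij : i ≠ j) :
    IsTotalProperWalk cv ce (centerWalk i j) := by
  obtain ⟨w, hw, hproper⟩ := h (.inr i) (.inr j)
  rwa [← eq_centerWalk_of_isPath hij hw]

theorem TotalProperConnected.star_edgeColor_ne
    (h : TotalProperConnected (completeBipartiteGraph (Fin 1) W) cv ce) {i j : W} (hij : i ≠ j) :
    ce s(.inl 0, .inr i) ≠ ce s(.inl 0, .inr j) := by
  have hproper := h.isTotalProperWalk_centerWalk hij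
  rw [centerWalk, isTotalProperWalk_cons_cons_nil_iff, Sym2.eq_swap] at hproper
  exact hproper.1

theorem TotalProperConnected.star_centerColor_ne_edgeColor [Nontrivial W]
    (h : TotalProperConnected (completeBipartiteGraph (Fin 1) W) cv ce) (i : W) :
    cv (.inl 0) ≠ ce s(.inl 0, .inr i) := by
  obtain ⟨j, hji⟩ := exists_ne i
  have hproper := h.isTotalProperWalk_centerWalk hji.symm
  rw [centerWalk, isTotalProperWalk_cons_cons_nil_iff, Sym2.eq_swap] at hproper
  exact hproper.2.1

theorem TotalProperConnected.card_add_one_le_of_star [Fintype W] [Nontrivial W] [Fintype α]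
    (h : TotalProperConnected (completeBipartiteGraph (Fin 1) W) cv ce) :
    Fintype.card W + 1 ≤ Fintype.card α := by
  let f : Option W → α := fun o => o.elim (cv (.inl 0)) fun j => ce s(.inl 0, .inr j)
  have hf : f.Injective := by
    rintro (_ | i) (_ | j) hfij
    · rfl
    · exact absurd hfij (h.star_centerColor_ne_edgeColor j)
    · exact absurd hfij.symm (h.star_centerColor_ne_edgeColor i)
    · exact congrArg some (by_contra fun hij => h.star_edgeColor_ne hij hfij)
  simpa using Fintype.card_le_of_injective f hf

end Coloring

theorem tpc_star [Fintype W] [Nontrivial W] :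
    tpc (completeBipartiteGraph (Fin 1) W) = Fintype.card W + 1 := by
  have hconn := totalProperConnected_star (W := W)
  refine le_antisymm (by simpa using tpc_le_card hconn) (le_csInf ?_ ?_)
  · exact ⟨_, _, _, hconn.comp_injective (Fintype.equivFin _).injective⟩
  · rintro k ⟨cv, ce, h⟩
    simpa using h.card_add_one_le_of_star

end Star

/-- For the star `K_{1,n}` with `n ≥ 2`, `tpc (K_{1,n}) = n + 1`. -/
theorem stmt_7 (n : ℕ) (hn : 2 ≤ n) :
    tpc (completeBipartiteGraph (Fin 1) (Fin n)) = n + 1 := by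
  have : Nontrivial (Fin n) := Fin.nontrivial_iff_two_le.mpr hn
  simpa using tpc_star (W := Fin n)
end

section
/- For the complete bipartite graph K_{m,n} with 2 ≤ m ≤ n, tpc(K_{m,n}) = 3. -/
open SimpleGraph

variable {V : Type*} {α : Type*}

/-!
Lower bound: a total proper path between two distinct nonadjacent vertices has length at
least two, and its first two edges and the vertex between them carry three different colors.

Upper bound: number both sides from `0` and color the edge between row `i` and column `j` by
`edgeColor i j`, which is `2` on the diagonal. Rows `i < i'` are joined through column `i`
(it exists because `m ≤ n`). Column `0` is joined to every other column through row `0`, and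
columns `0 < j < j'` by the path `j, 0, 0, 1, j'` (alternating sides), whose edges are colored
`0, 2, 1, 0` and whose inner vertices `1, 0, 2`.
-/

def TotalProperJoined (G : SimpleGraph V) (cv : V → α) (ce : Sym2 V → α) (u v : V) : Prop :=
  ∃ w : G.Walk u v, w.IsPath ∧ IsTotalProperWalk cv ce w

section TotalProperPaths

variable {G : SimpleGraph V} {cv : V → α} {ce : Sym2 V → α}

lemma IsTotalProperWalk.reverse {u v : V} {w : G.Walk u v} (hw : IsTotalProperWalk cv ce w) :
    IsTotalProperWalk cv ce w.reverse := by
  obtain ⟨hee, hvv, hve⟩ := hw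
  set L := w.length
  have hE : w.edges.length = L := w.length_edges
  have hS : w.support.length = L + 1 := w.length_support
  have edge_rev : ∀ i, i < L →
      w.reverse.edges.getD i s(v, v) = w.edges.getD (L - 1 - i) s(u, u) := by
    intro i hi
    rw [Walk.edges_reverse, List.getD_reverse _ (by omega), hE,
      List.getD_eq_getElem _ _ (by omega), List.getD_eq_getElem _ _ (by omega)]
  have vert_rev : ∀ i, i ≤ L →
      w.reverse.support.getD i v = w.support.getD (L - i) u := by
    intro i hi
    rw [Walk.support_reverse, List.getD_reverse _ (by omega), hS,
      List.getD_eq_getElem _ _ (by omega), List.getD_eq_getElem _ _ (by omega)]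
    simp only [Nat.add_sub_cancel]
  simp only [IsTotalProperWalk, Walk.length_reverse]
  refine ⟨fun i hi => ?_, fun i hi₁ hi₂ => ?_, fun i hi₁ hi₂ => ?_⟩
  · rw [edge_rev i (by omega), edge_rev (i + 1) hi]
    have := hee (L - 2 - i) (by omega)
    rw [show L - 2 - i + 1 = L - 1 - i by omega] at this
    rwa [show L - 1 - (i + 1) = L - 2 - i by omega, ne_comm]
  · rw [vert_rev i (by omega), vert_rev (i + 1) (by omega)]
    have := hvv (L - 1 - i) (by omega) (by omega)
    rw [show L - 1 - i + 1 = L - i by omega] at this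
    rwa [show L - (i + 1) = L - 1 - i by omega, ne_comm]
  · rw [vert_rev i hi₂.le, edge_rev (i - 1) (by omega), edge_rev i hi₂]
    obtain ⟨h₁, h₂⟩ := hve (L - i) (by omega) (by omega)
    rw [show L - 1 - (i - 1) = L - i by omega, show L - 1 - i = L - i - 1 by omega]
    exact ⟨h₂, h₁⟩

lemma isTotalProperWalk_nil (u : V) : IsTotalProperWalk cv ce (Walk.nil : G.Walk u u) := by
  simp [IsTotalProperWalk]

lemma isTotalProperWalk_single {u v : V} (h : G.Adj u v) :
    IsTotalProperWalk cv ce (Walk.cons h Walk.nil) := by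
  simp only [IsTotalProperWalk, Walk.length_cons, Walk.length_nil]
  refine ⟨?_, ?_, ?_⟩ <;> omega

lemma isTotalProperWalk_two {u v w : V} (h₁ : G.Adj u v) (h₂ : G.Adj v w)
    (he : ce s(u, v) ≠ ce s(v, w)) (hv₁ : cv v ≠ ce s(u, v)) (hv₂ : cv v ≠ ce s(v, w)) :
    IsTotalProperWalk cv ce (Walk.cons h₁ (Walk.cons h₂ Walk.nil)) := by
  refine ⟨fun i hi => ?_, fun i hi₁ hi₂ => ?_, fun i hi₁ hi₂ => ?_⟩ <;>
    simp only [Walk.length_cons, Walk.length_nil] at *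
  · obtain rfl : i = 0 := by omega
    simpa using he
  · omega
  · obtain rfl : i = 1 := by omega
    simpa using ⟨hv₁, hv₂⟩

lemma isTotalProperWalk_four {u v w x y : V} (h₁ : G.Adj u v) (h₂ : G.Adj v w)
    (h₃ : G.Adj w x) (h₄ : G.Adj x y)
    (he₁ : ce s(u, v) ≠ ce s(v, w)) (he₂ : ce s(v, w) ≠ ce s(w, x))
    (he₃ : ce s(w, x) ≠ ce s(x, y)) (hvw : cv v ≠ cv w) (hwx : cv w ≠ cv x)
    (hv₁ : cv v ≠ ce s(u, v)) (hv₂ : cv v ≠ ce s(v, w))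
    (hw₁ : cv w ≠ ce s(v, w)) (hw₂ : cv w ≠ ce s(w, x))
    (hx₁ : cv x ≠ ce s(w, x)) (hx₂ : cv x ≠ ce s(x, y)) :
    IsTotalProperWalk cv ce
      (Walk.cons h₁ (Walk.cons h₂ (Walk.cons h₃ (Walk.cons h₄ Walk.nil)))) := by
  refine ⟨fun i hi => ?_, fun i hi₁ hi₂ => ?_, fun i hi₁ hi₂ => ?_⟩ <;>
    simp only [Walk.length_cons, Walk.length_nil] at *
  · obtain rfl | rfl | rfl : i = 0 ∨ i = 1 ∨ i = 2 := by omega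
    · simpa using he₁
    · simpa using he₂
    · simpa using he₃
  · obtain rfl | rfl : i = 1 ∨ i = 2 := by omega
    · simpa using hvw
    · simpa using hwx
  · obtain rfl | rfl | rfl : i = 1 ∨ i = 2 ∨ i = 3 := by omega
    · simpa using ⟨hv₁, hv₂⟩
    · simpa using ⟨hw₁, hw₂⟩
    · simpa using ⟨hx₁, hx₂⟩

lemma totalProperJoined_refl (u : V) : TotalProperJoined G cv ce u u :=
  ⟨Walk.nil, Walk.IsPath.nil, isTotalProperWalk_nil u⟩

lemma TotalProperJoined.symm {u v : V} (h : TotalProperJoined G cv ce u v) :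
    TotalProperJoined G cv ce v u :=
  let ⟨w, hp, hw⟩ := h
  ⟨w.reverse, hp.reverse, hw.reverse⟩

lemma totalProperJoined_of_adj {u v : V} (h : G.Adj u v) : TotalProperJoined G cv ce u v :=
  ⟨_, by simp [Walk.isPath_def, h.ne], isTotalProperWalk_single h⟩

lemma totalProperJoined_of_adj_adj {u v w : V} (h₁ : G.Adj u v) (h₂ : G.Adj v w) (huw : u ≠ w)
    (he : ce s(u, v) ≠ ce s(v, w)) (hv₁ : cv v ≠ ce s(u, v)) (hv₂ : cv v ≠ ce s(v, w)) :
    TotalProperJoined G cv ce u w :=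
  ⟨_, by simp [Walk.isPath_def, h₁.ne, h₂.ne, huw], isTotalProperWalk_two h₁ h₂ he hv₁ hv₂⟩

lemma three_le_card_of_totalProperJoined [Fintype α] {u v : V} (hne : u ≠ v)
    (hadj : ¬ G.Adj u v) (h : TotalProperJoined G cv ce u v) : 3 ≤ Fintype.card α := by
  obtain ⟨w, -, hee, -, hve⟩ := h
  rcases w with _ | ⟨h₁, _ | ⟨h₂, p⟩⟩
  · exact absurd rfl hne
  · exact absurd h₁ hadj
  have he := hee 0 (by simp)
  have hv := hve 1 le_rfl (by simp)
  simp only [Walk.edges_cons, Walk.support_cons, List.getD_cons_zero,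
    List.getD_cons_succ, Nat.sub_self] at he hv
  exact Fintype.two_lt_card_iff.mpr ⟨_, _, _, he, hv.1.symm, hv.2.symm⟩

lemma tpc_eq_three {u v : V} (hne : u ≠ v) (hadj : ¬ G.Adj u v)
    (h : ∃ (cv : V → Fin 3) (ce : Sym2 V → Fin 3), TotalProperConnected G cv ce) :
    tpc G = 3 := by
  refine le_antisymm (Nat.sInf_le h) (le_csInf ⟨3, h⟩ ?_)
  rintro k ⟨cv, ce, hk⟩
  simpa using three_le_card_of_totalProperJoined hne hadj (hk u v)

end TotalProperPaths

def bipartiteEdgeColoring {A B : Type*} [Inhabited α] (c : A → B → α) : Sym2 (A ⊕ B) → α :=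
  Sym2.lift ⟨fun
    | .inl a, .inr b | .inr b, .inl a => c a b
    | _, _ => default, by rintro (a | b) (a' | b') <;> rfl⟩

@[simp] lemma bipartiteEdgeColoring_inl_inr {A B : Type*} [Inhabited α] (c : A → B → α)
    (a : A) (b : B) : bipartiteEdgeColoring c s(.inl a, .inr b) = c a b := rfl

@[simp] lemma bipartiteEdgeColoring_inr_inl {A B : Type*} [Inhabited α] (c : A → B → α)
    (a : A) (b : B) : bipartiteEdgeColoring c s(.inr b, .inl a) = c a b := rfl

namespace CompleteBipartite

def edgeColor (i j : ℕ) : Fin 3 :=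
  if i = j then 2 else if i = 0 then 0 else if j = 0 then 1 else if i = 1 ∨ j = 1 then 0 else 1

def rowColor (i : ℕ) : Fin 3 :=
  if i = 0 then 1 else if i = 1 then 2 else 0

def columnColor (j : ℕ) : Fin 3 :=
  if j = 1 then 1 else 0

variable {m n : ℕ}

def vertexColoring : Fin m ⊕ Fin n → Fin 3 :=
  Sum.elim (fun i => rowColor i) (fun j => columnColor j)

def edgeColoring : Sym2 (Fin m ⊕ Fin n) → Fin 3 :=
  bipartiteEdgeColoring fun i j => edgeColor i j

local notation "K" => completeBipartiteGraph (Fin m) (Fin n)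

lemma totalProperJoined_inl_inl (hmn : m ≤ n) (i i' : Fin m) :
    TotalProperJoined K vertexColoring edgeColoring (.inl i) (.inl i') := by
  wlog hlt : i < i' generalizing i i'
  · obtain rfl | hgt := (not_lt.mp hlt).eq_or_lt
    · exact totalProperJoined_refl _
    · exact (this i' i hgt).symm
  refine totalProperJoined_of_adj_adj (v := .inr ⟨i, by omega⟩) (by simp) (by simp)
    (by simpa using hlt.ne) ?_ ?_ ?_ <;>
  simp only [edgeColoring, vertexColoring, bipartiteEdgeColoring_inl_inr,
    bipartiteEdgeColoring_inr_inl, Sum.elim_inr, edgeColor, columnColor] <;>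
  split_ifs <;> first | decide | omega

lemma totalProperJoined_inr_inr (hm : 2 ≤ m) (j j' : Fin n) :
    TotalProperJoined K vertexColoring edgeColoring (.inr j) (.inr j') := by
  wlog hlt : j < j' generalizing j j'
  · obtain rfl | hgt := (not_lt.mp hlt).eq_or_lt
    · exact totalProperJoined_refl _
    · exact (this j' j hgt).symm
  let a₀ : Fin m := ⟨0, by omega⟩
  by_cases hj₀ : (j : ℕ) = 0
  · refine totalProperJoined_of_adj_adj (v := .inl a₀) (by simp) (by simp)
      (by simpa using hlt.ne) ?_ ?_ ?_ <;>
    simp only [edgeColoring, vertexColoring, bipartiteEdgeColoring_inl_inr,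
      bipartiteEdgeColoring_inr_inl, Sum.elim_inl, edgeColor, rowColor, a₀] <;>
    split_ifs <;> first | decide | omega
  let a₁ : Fin m := ⟨1, by omega⟩
  let b₀ : Fin n := ⟨0, by omega⟩
  have h₁ : (K).Adj (.inr j) (.inl a₀) := by simp
  have h₂ : (K).Adj (.inl a₀) (.inr b₀) := by simp
  have h₃ : (K).Adj (.inr b₀) (.inl a₁) := by simp
  have h₄ : (K).Adj (.inl a₁) (.inr j') := by simp
  have e₁ : edgeColor 0 j = 0 := by unfold edgeColor; split_ifs <;> first | rfl | omega
  have e₄ : edgeColor 1 j' = 0 := by unfold edgeColor; split_ifs <;> first | rfl | omega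
  refine ⟨.cons h₁ (.cons h₂ (.cons h₃ (.cons h₄ .nil))), ?_, isTotalProperWalk_four _ _ _ _
    ?_ ?_ ?_ ?_ ?_ ?_ ?_ ?_ ?_ ?_ ?_⟩
  · simp [Walk.isPath_def, Fin.ext_iff, a₀, a₁, b₀, hj₀, Fin.val_ne_of_ne hlt.ne,
      (Nat.zero_lt_of_lt hlt).ne]
  all_goals
    simp only [edgeColoring, vertexColoring, bipartiteEdgeColoring_inl_inr,
      bipartiteEdgeColoring_inr_inl, Sum.elim_inl, Sum.elim_inr, a₀, a₁, b₀, e₁, e₄]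
    decide

lemma totalProperConnected (hm : 2 ≤ m) (hmn : m ≤ n) :
    TotalProperConnected K vertexColoring edgeColoring := by
  rintro (i | j) (i' | j')
  · exact totalProperJoined_inl_inl hmn i i'
  · exact totalProperJoined_of_adj (by simp)
  · exact totalProperJoined_of_adj (by simp)
  · exact totalProperJoined_inr_inr hm j j'

end CompleteBipartite

/-- For the complete bipartite graph `K_{m,n}` with `2 ≤ m ≤ n`, `tpc (K_{m,n}) = 3`. -/
theorem stmt_8 (m n : ℕ) (hm : 2 ≤ m) (hmn : m ≤ n) :
    tpc (completeBipartiteGraph (Fin m) (Fin n)) = 3 :=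
  tpc_eq_three (u := .inl ⟨0, by omega⟩) (v := .inl ⟨1, by omega⟩) (by simp) (by simp)
    ⟨_, _, CompleteBipartite.totalProperConnected hm hmn⟩
end

section
/- Let C_n = v_1 v_2 … v_n v_1 be a cycle, with indices read modulo n. Suppose there exists a total coloring of C_n with three colors such that both of the following are total proper paths: the path v_j v_{j+1} … v_{i-1} v_i and the path v_l v_{l+1} … v_{k-1} v_k (traversing the cycle with indices increasing modulo n), where 1 ≤ i < j < k < l ≤ n, |i − l| > 1 and |k − j| > 1. Then 3 divides n. -/
/-!
On a total proper path coloured from `Fin 3`, every internal vertex avoids the colours of its two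
edges, so two edges at distance two cannot share a colour: otherwise the two vertices between them
would both be forced to the one remaining colour. Hence any three consecutive edges are rainbow,
and, reading `Fin 3` additively as `ℤ/3`, the edge colours along the path form an arithmetic
progression with nonzero difference `d`. The two arcs share the consecutive edges starting at
`v_j` and `v_{j+1}`, so they have the same difference, and they also share the edge starting at
`v_l`. Going from `v_j` to `v_l` along the first arc and back to `v_j` along the second adds
`n • d` to the colour, so `n • d = 0` in `ℤ/3`, i.e. `3 ∣ n`.
-/

/-- On the cycle `C_n` with vertices `v_t = (t : ZMod n)` and edges `v_t v_{t+1}`, given a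
total coloring (`cv t` the color of the vertex `v_t`, `ce t` the color of the edge
`v_t v_{t+1}`), the arc starting at `v_a` and traversing `m` edges with increasing indices
(vertices `v_a, v_{a+1}, …, v_{a+m}`) is a *total proper path* if (i) any two adjacent
edges on it differ in color, (ii) any two internal adjacent vertices on it differ in
color, and (iii) any internal vertex differs in color from its two incident edges. -/
def TotalProperArc (n : ℕ) (cv ce : ZMod n → Fin 3) (a m : ℕ) : Prop :=
  (∀ t : ℕ, t + 1 < m →
      ce ((a : ZMod n) + (t : ℕ)) ≠ ce ((a : ZMod n) + ((t + 1 : ℕ) : ZMod n))) ∧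
  (∀ t : ℕ, 1 ≤ t → t + 1 < m →
      cv ((a : ZMod n) + (t : ℕ)) ≠ cv ((a : ZMod n) + ((t + 1 : ℕ) : ZMod n))) ∧
  (∀ t : ℕ, 1 ≤ t → t < m →
      cv ((a : ZMod n) + (t : ℕ)) ≠ ce ((a : ZMod n) + ((t - 1 : ℕ) : ZMod n)) ∧
      cv ((a : ZMod n) + (t : ℕ)) ≠ ce ((a : ZMod n) + (t : ℕ)))

lemma fin_three_sub_eq_sub_of_ne {x y z : Fin 3} (hxy : x ≠ y) (hzx : z ≠ x) (hzy : z ≠ y) :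
    z - y = y - x := by
  revert x y z; decide

lemma fin_three_dvd_of_nsmul_eq_zero {d : Fin 3} (hd : d ≠ 0) {n : ℕ} (h : n • d = 0) :
    3 ∣ n := by
  have h3 : ∀ x : Fin 3, 3 • x = 0 := by decide
  exact addOrderOf_eq_prime (h3 d) hd ▸ addOrderOf_dvd_of_nsmul_eq_zero h

lemma fin_three_apply_eq_add_nsmul {m : ℕ} {c : ℕ → Fin 3}
    (h₁ : ∀ t, t + 1 < m → c t ≠ c (t + 1)) (h₂ : ∀ t, t + 2 < m → c (t + 2) ≠ c t)
    {t : ℕ} (ht : t < m) : c t = c 0 + t • (c 1 - c 0) := by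
  have hstep : ∀ s, s + 1 < m → c (s + 1) - c s = c 1 - c 0 := by
    intro s hs
    induction s with
    | zero => rfl
    | succ s ih =>
      rw [← ih (by omega)]
      exact fin_three_sub_eq_sub_of_ne (h₁ s (by omega)) (h₂ s hs) (h₁ (s + 1) hs).symm
  induction t with
  | zero => simp
  | succ t ih =>
    rw [← sub_add_cancel (c (t + 1)) (c t), hstep t ht, ih (by omega), succ_nsmul]
    abel

namespace TotalProperArc

variable {n : ℕ} {cv ce : ZMod n → Fin 3} {a m : ℕ}

lemma edge_add_two_ne (h : TotalProperArc n cv ce a m) {t : ℕ} (ht : t + 2 < m) :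
    ce (a + ((t + 2 : ℕ) : ZMod n)) ≠ ce (a + (t : ZMod n)) := by
  intro heq
  obtain ⟨hE, hV, hVE⟩ := h
  obtain ⟨h₁l, h₁r⟩ := hVE (t + 1) (by omega) (by omega)
  obtain ⟨h₂l, h₂r⟩ := hVE (t + 2) (by omega) (by omega)
  rw [Nat.add_sub_cancel] at h₁l
  rw [show t + 2 - 1 = t + 1 from rfl] at h₂l
  rw [heq] at h₂r
  have hEt := hE t (by omega)
  exact hV (t + 1) (by omega) (by omega) <| sub_left_injective <|
    (fin_three_sub_eq_sub_of_ne hEt h₁l h₁r).trans (fin_three_sub_eq_sub_of_ne hEt h₂r h₂l).symm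

lemma edge_eq_add_nsmul (h : TotalProperArc n cv ce a m) {t : ℕ} (ht : t < m) :
    ce (a + (t : ZMod n)) = ce a + t • (ce (a + 1) - ce a) := by
  simpa using fin_three_apply_eq_add_nsmul (c := fun t : ℕ => ce (a + (t : ZMod n)))
    h.1 (fun _ ht => h.edge_add_two_ne ht) ht

end TotalProperArc

theorem stmt_13_general (n i j k l : ℕ)
    (hi : 1 ≤ i) (hkl : k < l) (hln : l ≤ n)
    (hkj : 1 < k - j)
    (cv ce : ZMod n → Fin 3)
    (hP1 : TotalProperArc n cv ce j (n - j + i))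
    (hP2 : TotalProperArc n cv ce l (n - l + k)) :
    3 ∣ n := by
  set d := ce ((j : ZMod n) + 1) - ce j with hd_def
  have hd : d ≠ 0 := sub_ne_zero.mpr (by simpa using (hP1.1 0 (by omega)).symm)
  have hjl : (l : ZMod n) + ((n - l + j : ℕ) : ZMod n) = j := by
    push_cast [Nat.cast_sub hln]; rw [ZMod.natCast_self]; ring
  have hj_arc₂ := hP2.edge_eq_add_nsmul (t := n - l + j) (by omega)
  have hj_succ_arc₂ := hP2.edge_eq_add_nsmul (t := n - l + j + 1) (by omega)
  rw [hjl] at hj_arc₂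
  rw [Nat.cast_succ, ← add_assoc, hjl] at hj_succ_arc₂
  have hd_arc₂ : ce (l + 1) - ce l = d := by
    rw [hd_def, hj_arc₂, hj_succ_arc₂, succ_nsmul]; abel
  have hl_arc₁ := hP1.edge_eq_add_nsmul (t := l - j) (by omega)
  rw [Nat.cast_sub (by omega : j ≤ l), add_sub_cancel, ← hd_def, hj_arc₂, hd_arc₂, add_assoc,
    ← add_nsmul, show n - l + j + (l - j) = n by omega, eq_comm, add_eq_left] at hl_arc₁
  exact fin_three_dvd_of_nsmul_eq_zero hd hl_arc₁

/-- If a total coloring of `C_n` with three colors makes both the arc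
`v_j v_{j+1} … v_i` and the arc `v_l v_{l+1} … v_k` (indices increasing modulo `n`)
total proper paths, where `1 ≤ i < j < k < l ≤ n`, `|i - l| > 1` and `|k - j| > 1`,
then `3 ∣ n`. -/
theorem stmt_13 (n i j k l : ℕ)
    (hi : 1 ≤ i) (hij : i < j) (hjk : j < k) (hkl : k < l) (hln : l ≤ n)
    (hil : 1 < l - i) (hkj : 1 < k - j)
    (cv ce : ZMod n → Fin 3)
    (hP1 : TotalProperArc n cv ce j (n - j + i))
    (hP2 : TotalProperArc n cv ce l (n - l + k)) :
    3 ∣ n :=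
  stmt_13_general n i j k l hi hkl hln hkj cv ce hP1 hP2
end

section
/- Every connected graph G of order n ≥ 4 and minimum degree δ has a connected two-way two-step dominating set D of size at most 3n/(δ+1) − 2. -/
/-!
For `δ ≤ 1` the whole vertex set works. For `δ ≥ 2` there are no pendant vertices; call `D`
cheap if it induces a connected subgraph and `(δ + 1)(|D| + 2) ≤ 3 |N[D]|`, where `N[D]` is
the set of vertices at distance at most `1` from `D`. A single vertex is cheap, and a maximal
cheap set is the required `D`: if some `v` is at distance `3` from `D`, or at distance `2` with
at most one neighbour at distance `1`, then adjoining a shortest path from `D` to `v` adds `3`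
(resp. `2`) vertices to `D` but at least `δ + 1` (resp. `δ`) new vertices of `N[v]` to `N[D]`,
and `3δ ≥ 2(δ + 1)` keeps the enlarged set cheap. Finally `|N[D]| ≤ n`.
-/

open SimpleGraph

/-- The distance from a vertex `v` to a set `D` of vertices: the minimum over `u ∈ D`
of the graph distance from `u` to `v`. -/
noncomputable def setDist {V : Type*} (G : SimpleGraph V) (D : Set V) (v : V) : ℕ :=
  sInf {d | ∃ u ∈ D, G.dist u v = d}

section

variable {V : Type*} {G : SimpleGraph V} {D D' : Set V} {u v : V}

theorem exists_mem_dist_eq_setDist (hD : D.Nonempty) (v : V) :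
    ∃ u ∈ D, G.dist u v = setDist G D v :=
  Nat.sInf_mem (s := {d | ∃ u ∈ D, G.dist u v = d}) ⟨_, hD.some, hD.some_mem, rfl⟩

theorem setDist_le_dist (hu : u ∈ D) (v : V) : setDist G D v ≤ G.dist u v :=
  Nat.sInf_le ⟨u, hu, rfl⟩

theorem setDist_eq_zero_of_mem (hv : v ∈ D) : setDist G D v = 0 := by
  simpa using setDist_le_dist (G := G) hv v

theorem setDist_mono (hD : D.Nonempty) (h : D ⊆ D') (v : V) :
    setDist G D' v ≤ setDist G D v := by
  obtain ⟨u, hu, hdist⟩ := exists_mem_dist_eq_setDist (G := G) hD v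
  exact hdist ▸ setDist_le_dist (h hu) v

theorem setDist_le_setDist_add_dist (hG : G.Connected) (hD : D.Nonempty) (a b : V) :
    setDist G D b ≤ setDist G D a + G.dist a b := by
  obtain ⟨u, hu, hdist⟩ := exists_mem_dist_eq_setDist (G := G) hD a
  calc setDist G D b ≤ G.dist u b := setDist_le_dist hu b
    _ ≤ G.dist u a + G.dist a b := hG.dist_triangle
    _ = setDist G D a + G.dist a b := by rw [hdist]

theorem setDist_le_setDist_add_one_of_adj (hG : G.Connected) (hD : D.Nonempty) {a b : V}
    (h : G.Adj a b) : setDist G D b ≤ setDist G D a + 1 := by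
  simpa [dist_eq_one_iff_adj.mpr h] using setDist_le_setDist_add_dist hG hD a b

theorem exists_setDist_eq_of_le (hG : G.Connected) (hD : D.Nonempty) {k : ℕ}
    (hk : k ≤ setDist G D v) : ∃ x, setDist G D x = k := by
  obtain ⟨u, hu, hdist⟩ := exists_mem_dist_eq_setDist (G := G) hD v
  obtain ⟨p, hp⟩ := hG.exists_walk_length_eq_dist u v
  refine ⟨p.getVert k, le_antisymm ?_ ?_⟩
  · calc setDist G D (p.getVert k) ≤ G.dist u (p.getVert k) := setDist_le_dist hu _
      _ ≤ (p.take k).length := dist_le _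
      _ ≤ k := by simp [Walk.take_length]
  · have hdrop : G.dist (p.getVert k) v ≤ setDist G D v - k := by
      simpa [Walk.drop_length, hp, hdist] using dist_le (p.drop k)
    have := setDist_le_setDist_add_dist hG hD (p.getVert k) v
    omega

def closedNbhd (G : SimpleGraph V) (D : Set V) : Set V :=
  {x | setDist G D x ≤ 1}

theorem closedNbhd_mono (hD : D.Nonempty) (h : D ⊆ D') : closedNbhd G D ⊆ closedNbhd G D' :=
  fun x hx => (setDist_mono hD h x).trans hx

theorem insert_neighborSet_subset_closedNbhd (hv : v ∈ D) :
    insert v (G.neighborSet v) ⊆ closedNbhd G D := by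
  rintro x (rfl | hx)
  · simp [closedNbhd, setDist_eq_zero_of_mem hv]
  · exact (setDist_le_dist hv x).trans (dist_eq_one_iff_adj.mpr hx).le

theorem ncard_neighborSet_add_one_le [Finite V] (hG : G.Connected) (hD : D.Nonempty)
    (hv : 2 ≤ setDist G D v) :
    (G.neighborSet v).ncard + 1 ≤ (insert v (G.neighborSet v) \ closedNbhd G D).ncard +
      {w | G.Adj v w ∧ setDist G D w = 1}.ncard := by
  have hsub : insert v (G.neighborSet v) ⊆
      (insert v (G.neighborSet v) \ closedNbhd G D) ∪ {w | G.Adj v w ∧ setDist G D w = 1} := by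
    intro x hx
    by_cases hxD : x ∈ closedNbhd G D
    · change setDist G D x ≤ 1 at hxD
      rcases hx with rfl | hx
      · omega
      · have := setDist_le_setDist_add_one_of_adj hG hD (G.adj_symm hx)
        exact Or.inr ⟨hx, by omega⟩
    · exact Or.inl ⟨hx, hxD⟩
  calc (G.neighborSet v).ncard + 1 = (insert v (G.neighborSet v)).ncard :=
        (Set.ncard_insert_of_notMem G.notMem_neighborSet_self).symm
    _ ≤ _ := Set.ncard_le_ncard hsub
    _ ≤ _ := Set.ncard_union_le _ _

theorem ncard_union_support_le [Finite V] (hu : u ∈ D) (p : G.Walk u v) :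
    (D ∪ {x | x ∈ p.support}).ncard ≤ D.ncard + p.length := by
  classical
  have hsupp : {x | x ∈ p.support}.ncard ≤ p.length + 1 := by
    rw [← p.length_support, ← List.coe_toFinset, Set.ncard_coe_finset]
    exact List.toFinset_card_le _
  have hinter : 0 < (D ∩ {x | x ∈ p.support}).ncard :=
    (Set.ncard_pos).mpr ⟨u, hu, p.start_mem_support⟩
  have := Set.ncard_union_add_ncard_inter D {x | x ∈ p.support}
  omega

structure IsCheapConnected (G : SimpleGraph V) (δ : ℕ) (D : Set V) : Prop where
  connected : (G.induce D).Connected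
  budget : (δ + 1) * (D.ncard + 2) ≤ 3 * (closedNbhd G D).ncard

variable {δ : ℕ}

theorem IsCheapConnected.nonempty (hD : IsCheapConnected G δ D) : D.Nonempty :=
  Set.nonempty_coe_sort.mp hD.connected.nonempty

theorem isCheapConnected_singleton [Finite V] (hδ : δ ≤ (G.neighborSet u).ncard) :
    IsCheapConnected G δ {u} where
  connected := by
    rw [induce_singleton_eq_top]
    exact connected_top
  budget := by
    have hN : (G.neighborSet u).ncard + 1 ≤ (closedNbhd G {u}).ncard := by
      rw [← Set.ncard_insert_of_notMem G.notMem_neighborSet_self]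
      exact Set.ncard_le_ncard (insert_neighborSet_subset_closedNbhd rfl)
    simp only [Set.ncard_singleton]
    omega

theorem IsCheapConnected.exists_ssuperset [Finite V] (hG : G.Connected)
    (hD : IsCheapConnected G δ D) (hv : 2 ≤ setDist G D v)
    (hgain : (δ + 1) * setDist G D v ≤
      3 * (insert v (G.neighborSet v) \ closedNbhd G D).ncard) :
    ∃ D', D ⊂ D' ∧ IsCheapConnected G δ D' := by
  obtain ⟨u, hu, hdist⟩ := exists_mem_dist_eq_setDist (G := G) hD.nonempty v
  obtain ⟨p, hp⟩ := hG.exists_walk_length_eq_dist u v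
  set D' := D ∪ {x | x ∈ p.support}
  set B := insert v (G.neighborSet v) \ closedNbhd G D
  have hvD : v ∉ D := fun h => by rw [setDist_eq_zero_of_mem h] at hv; omega
  have hvD' : v ∈ D' := Or.inr p.end_mem_support
  have hDD' : D ⊆ D' := Set.subset_union_left
  have hcard : D'.ncard ≤ D.ncard + setDist G D v := by
    simpa only [hp, hdist] using ncard_union_support_le hu p
  have hnbhd : (closedNbhd G D).ncard + B.ncard ≤ (closedNbhd G D').ncard := by
    rw [← Set.ncard_union_eq Set.disjoint_sdiff_right]
    refine Set.ncard_le_ncard (Set.union_subset (closedNbhd_mono hD.nonempty hDD') ?_)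
    exact Set.sdiff_subset.trans (insert_neighborSet_subset_closedNbhd hvD')
  refine ⟨D', Set.ssubset_iff_of_subset hDD' |>.mpr ⟨v, hvD', hvD⟩, ?_, ?_⟩
  · exact induce_union_connected hD.connected.preconnected
      p.connected_induce_support.preconnected ⟨u, hu, p.start_mem_support⟩
  · calc (δ + 1) * (D'.ncard + 2)
        ≤ (δ + 1) * (D.ncard + 2) + (δ + 1) * setDist G D v := by
          rw [← mul_add]; exact Nat.mul_le_mul_left _ (by omega)
      _ ≤ 3 * (closedNbhd G D).ncard + 3 * B.ncard := add_le_add hD.budget hgain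
      _ ≤ 3 * (closedNbhd G D').ncard := by rw [← mul_add]; exact Nat.mul_le_mul_left _ hnbhd

section MaximalCheap

variable [Finite V] (hG : G.Connected) (hδ : ∀ v : V, δ ≤ (G.neighborSet v).ncard)
  (hD : Maximal (IsCheapConnected G δ) D)
include hG hδ hD

theorem setDist_ne_three_of_maximal (v : V) : setDist G D v ≠ 3 := by
  intro hv
  have hnone : {w | G.Adj v w ∧ setDist G D w = 1} = ∅ := by
    refine Set.eq_empty_of_forall_notMem fun w ⟨hvw, hw⟩ => ?_
    have := setDist_le_setDist_add_one_of_adj hG hD.prop.nonempty hvw.symm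
    omega
  have := ncard_neighborSet_add_one_le hG hD.prop.nonempty (v := v) (by omega)
  rw [hnone, Set.ncard_empty] at this
  obtain ⟨D', hDD', hD'⟩ := hD.prop.exists_ssuperset hG (v := v) (by omega)
    (by have := hδ v; rw [hv]; omega)
  exact hD.not_gt hD' hDD'

theorem setDist_le_two_of_maximal (v : V) : setDist G D v ≤ 2 := by
  by_contra! h
  obtain ⟨x, hx⟩ := exists_setDist_eq_of_le hG hD.prop.nonempty h
  exact setDist_ne_three_of_maximal hG hδ hD x hx

theorem two_le_ncard_adj_setDist_eq_one_of_maximal (hδ2 : 2 ≤ δ) {v : V}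
    (hv : setDist G D v = 2) :
    2 ≤ {w | G.Adj v w ∧ setDist G D w = 1}.ncard := by
  by_contra! h
  have := ncard_neighborSet_add_one_le hG hD.prop.nonempty (v := v) (by omega)
  obtain ⟨D', hDD', hD'⟩ := hD.prop.exists_ssuperset hG (v := v) (by omega)
    (by have := hδ v; rw [hv]; omega)
  exact hD.not_gt hD' hDD'

end MaximalCheap

theorem cast_le_div_sub_two_of_mul_le {δ m n : ℕ} (h : (δ + 1) * (m + 2) ≤ 3 * n) :
    (m : ℝ) ≤ 3 * n / ((δ : ℝ) + 1) - 2 := by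
  rw [le_sub_iff_add_le, le_div_iff₀ (by positivity)]
  exact_mod_cast (mul_comm _ _).trans_le h

theorem IsCheapConnected.ncard_le [Fintype V] (hD : IsCheapConnected G δ D) :
    (D.ncard : ℝ) ≤ 3 * (Fintype.card V : ℝ) / ((δ : ℝ) + 1) - 2 := by
  refine cast_le_div_sub_two_of_mul_le (hD.budget.trans (Nat.mul_le_mul_left _ ?_))
  simpa using Set.ncard_le_card (closedNbhd G D)

end

/-- Every connected graph of order `n ≥ 4` and minimum degree `δ` has a connected two-way
two-step dominating set of size at most `3n/(δ+1) - 2`. -/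
theorem stmt_16 {V : Type*} [Fintype V] (G : SimpleGraph V) (hG : G.Connected)
    (hn : 4 ≤ Fintype.card V) (δ : ℕ) (hδ : ∀ v : V, δ ≤ (G.neighborSet v).ncard) :
    ∃ D : Set V,
      -- `D` is a two-step dominating set:
      (∀ v : V, setDist G D v ≤ 2) ∧
      -- two-way (a): every pendant vertex belongs to `D`:
      (∀ v : V, (G.neighborSet v).ncard = 1 → v ∈ D) ∧
      -- two-way (b): every vertex of `N²(D)` has at least two neighbors in `N¹(D)`:
      (∀ v : V, setDist G D v = 2 → 2 ≤ {w : V | G.Adj v w ∧ setDist G D w = 1}.ncard) ∧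
      -- `D` induces a connected subgraph:
      (G.induce D).Connected ∧
      -- size bound:
      (D.ncard : ℝ) ≤ 3 * (Fintype.card V : ℝ) / ((δ : ℝ) + 1) - 2 := by
  rcases le_or_gt 2 δ with hδ2 | hδ1
  · obtain ⟨u⟩ : Nonempty V := Fintype.card_pos_iff.mp (by omega)
    obtain ⟨D, -, hD⟩ := Finite.exists_le_maximal (isCheapConnected_singleton (hδ u))
    refine ⟨D, setDist_le_two_of_maximal hG hδ hD, fun v hv => ?_,
      fun v => two_le_ncard_adj_setDist_eq_one_of_maximal hG hδ hD hδ2, hD.prop.connected,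
      hD.prop.ncard_le⟩
    have := hδ v
    omega
  · have hcard : (Set.univ : Set V).ncard = Fintype.card V := by simp
    refine ⟨Set.univ, fun v => by simp [setDist_eq_zero_of_mem], fun v _ => trivial,
      fun v => by simp [setDist_eq_zero_of_mem], (induceUnivIso G).connected_iff.mpr hG,
      cast_le_div_sub_two_of_mul_le ?_⟩
    rw [hcard]
    interval_cases δ <;> omega
end

section
/- For every nontrivial connected graph G, tpc(G) > pvc(G). -/
open SimpleGraph

variable {V : Type*} {α : Type*}

/-- A walk in a vertex-colored graph is a *vertex-proper* walk if any two internal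
adjacent vertices on it differ in color. -/
def IsVertexProperWalk {G : SimpleGraph V} (cv : V → α) {u v : V} (w : G.Walk u v) : Prop :=
  ∀ i : ℕ, 1 ≤ i → i + 1 < w.length →
    cv (w.support.getD i u) ≠ cv (w.support.getD (i + 1) u)

/-- The proper vertex connection number: the smallest number of colors in a vertex coloring
such that any two vertices are joined by a vertex-proper path; it is `0` by convention for
complete graphs. -/
noncomputable def pvc (G : SimpleGraph V) : ℕ := by
  classical exact
    if G = (⊤ : SimpleGraph V) then 0
    else sInf {k | ∃ cv : V → Fin k,
      ∀ u v : V, ∃ w : G.Walk u v, w.IsPath ∧ IsVertexProperWalk cv w}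

/-!
Colouring every vertex and every edge with its own colour makes every path total proper, so
`tpc G` is finite. If `G` is not complete, two non-adjacent vertices are joined by a total proper
path of length at least two, whose first two edges and the vertex between them carry three
distinct colours, so `tpc G ≥ 3`. On the other hand the two-colouring of a spanning tree makes
every path of the tree vertex-proper, so `pvc G ≤ 2`. For complete `G`, `pvc G = 0 < tpc G`.
-/

theorem List.IsChain.rel_getD {R : α → α → Prop} {l : List α} (h : l.IsChain R) {i : ℕ}
    (hi : i + 1 < l.length) (d : α) : R (l.getD i d) (l.getD (i + 1) d) := by
  rw [List.getD_eq_getElem _ _ (by omega), List.getD_eq_getElem _ _ hi]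
  exact h.getElem i hi

theorem List.Nodup.getD_ne_getD_succ {l : List α} (h : l.Nodup) {i : ℕ}
    (hi : i + 1 < l.length) (d : α) : l.getD i d ≠ l.getD (i + 1) d :=
  h.isChain.rel_getD hi d

namespace SimpleGraph

variable {G : SimpleGraph V}

theorem isVertexProperWalk_of_isChain {cv : V → α} {u v : V} {w : G.Walk u v}
    (h : w.support.IsChain fun a b => cv a ≠ cv b) : IsVertexProperWalk cv w :=
  fun _ _ hi => h.rel_getD (by rw [w.length_support]; omega) u

theorem exists_isPath_isVertexProperWalk_of_coloring {H : SimpleGraph V} (hHG : H ≤ G)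
    (hH : H.Connected) (C : H.Coloring α) (u v : V) :
    ∃ w : G.Walk u v, w.IsPath ∧ IsVertexProperWalk C w := by
  classical
  let p := (hH u v).some.bypass
  refine ⟨p.mapLe hHG, (Walk.isPath_mapLe hHG).mpr (Walk.bypass_isPath _), ?_⟩
  apply isVertexProperWalk_of_isChain
  rw [Walk.support_mapLe_eq_support]
  exact p.isChain_adj_support.imp fun _ _ hadj => C.valid hadj

theorem pvc_le_two (hG : G.Connected) : pvc G ≤ 2 := by
  unfold pvc
  split_ifs
  · exact Nat.zero_le 2
  · obtain ⟨T, hTG, hT⟩ := hG.exists_isTree_le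
    exact Nat.sInf_le ⟨_, exists_isPath_isVertexProperWalk_of_coloring hTG hT.connected
      hT.coloringTwo⟩

theorem pvc_top : pvc (⊤ : SimpleGraph V) = 0 := by
  unfold pvc
  exact if_pos rfl

theorem IsTotalProperWalk.comp_injective {γ : Type*} {cv : V → α} {ce : Sym2 V → α}
    {f : α → γ} (hf : Function.Injective f) {u v : V} {w : G.Walk u v}
    (h : IsTotalProperWalk cv ce w) : IsTotalProperWalk (f ∘ cv) (f ∘ ce) w :=
  ⟨fun i hi => hf.ne (h.1 i hi), fun i h1 hi => hf.ne (h.2.1 i h1 hi),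
    fun i h1 hi => ⟨hf.ne (h.2.2 i h1 hi).1, hf.ne (h.2.2 i h1 hi).2⟩⟩

theorem TotalProperConnected.comp_injective {γ : Type*} {cv : V → α} {ce : Sym2 V → α}
    {f : α → γ} (hf : Function.Injective f) (h : TotalProperConnected G cv ce) :
    TotalProperConnected G (f ∘ cv) (f ∘ ce) := fun u v =>
  let ⟨w, hw, hwt⟩ := h u v
  ⟨w, hw, hwt.comp_injective hf⟩

theorem Walk.IsPath.isTotalProperWalk_inl_inr {u v : V} {w : G.Walk u v} (hw : w.IsPath) :
    IsTotalProperWalk (Sum.inl : V → V ⊕ Sym2 V) Sum.inr w := by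
  refine ⟨fun i hi => ?_, fun i _ hi => ?_, fun _ _ _ => ⟨Sum.inl_ne_inr, Sum.inl_ne_inr⟩⟩
  · exact Sum.inr_injective.ne <| (Walk.edges_nodup_of_support_nodup hw.support_nodup)
      |>.getD_ne_getD_succ (by rw [w.length_edges]; exact hi) _
  · exact Sum.inl_injective.ne <|
      hw.support_nodup.getD_ne_getD_succ (by rw [w.length_support]; omega) _

theorem totalProperConnected_inl_inr (hG : G.Preconnected) :
    TotalProperConnected G (Sum.inl : V → V ⊕ Sym2 V) Sum.inr := by
  classical
  exact fun u v =>
    ⟨_, Walk.bypass_isPath _, (Walk.bypass_isPath (hG u v).some).isTotalProperWalk_inl_inr⟩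

theorem exists_totalProperConnected_tpc [Finite V] (hG : G.Preconnected) :
    ∃ (cv : V → Fin (tpc G)) (ce : Sym2 V → Fin (tpc G)), TotalProperConnected G cv ce := by
  obtain ⟨k, ⟨e⟩⟩ := Finite.exists_equiv_fin (V ⊕ Sym2 V)
  have hk : ∃ (cv : V → Fin k) (ce : Sym2 V → Fin k), TotalProperConnected G cv ce :=
    ⟨_, _, (totalProperConnected_inl_inr hG).comp_injective e.injective⟩
  exact Nat.sInf_mem (s := {k | ∃ (cv : V → Fin k) (ce : Sym2 V → Fin k),
    TotalProperConnected G cv ce}) ⟨k, hk⟩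

theorem TotalProperConnected.three_le_card [Fintype α] {cv : V → α} {ce : Sym2 V → α}
    (h : TotalProperConnected G cv ce) (hG : G ≠ ⊤) : 3 ≤ Fintype.card α := by
  classical
  obtain ⟨x, y, hxy, hnadj⟩ := ne_top_iff_exists_not_adj.mp hG
  obtain ⟨w, -, hedge, -, hvert⟩ := h x y
  have hlen : 2 ≤ w.length :=
    (w.reachable.one_lt_dist_of_ne_of_not_adj hxy hnadj).trans_le (dist_le w)
  obtain ⟨hv₀, hv₁⟩ := hvert 1 le_rfl hlen
  have hcard : ({ce (w.edges.getD 0 s(x, x)), ce (w.edges.getD 1 s(x, x)),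
      cv (w.support.getD 1 x)} : Finset α).card = 3 :=
    Finset.card_eq_three.mpr ⟨_, _, _, hedge 0 hlen, hv₀.symm, hv₁.symm, rfl⟩
  exact hcard ▸ Finset.card_le_univ _

end SimpleGraph

theorem stmt_18_general {V : Type*} [Fintype V] (G : SimpleGraph V)
    (hG : G.Connected) :
    pvc G < tpc G := by
  obtain ⟨cv, ce, hcon⟩ := exists_totalProperConnected_tpc hG.preconnected
  by_cases hT : G = ⊤
  · subst hT
    rw [pvc_top]
    exact Fin.pos (cv hG.nonempty.some)
  · calc pvc G ≤ 2 := pvc_le_two hG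
      _ < 3 := by norm_num
      _ ≤ tpc G := by simpa using hcon.three_le_card hT

/-- For every nontrivial connected graph `G`, `tpc G > pvc G`. -/
theorem stmt_18 {V : Type*} [Fintype V] (G : SimpleGraph V)
    (hG : G.Connected) (hV : Nontrivial V) :
    pvc G < tpc G :=
  stmt_18_general G hG
end
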